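/- Let k be a field and let u, v ∈ k be nonzero. There exists a nonzero quadratic form q(x,y,z) = a x² + b y² + c z² + d xy + e xz + f yz (i.e., with (a,b,c,d,e,f) ≠ 0) vanishing at all six coordinate triples (u²,u,1), (u^{−2},u^{−1},1), (v²,v,1), (v^{−2},v^{−1},1), (1,0,0), (0,1,0) if and only if (u²−1)(v²−1)(u−v)(uv−1) = 0. -/

import Mathlib

/-!
A conic through `(1,0,0)` and `(0,1,0)` has no `x²`, `y²` terms, so it is
`c z² + d xy + e xz + f yz`. On `(t², t, 1)` it is the cubic `c + f t + e t² + d t³`, and on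
`(t⁻², t⁻¹, 1)`, after multiplying by `t³`, the reversed cubic `c t³ + f t² + e t + d`.
Requiring both to vanish at `t = u` and `t = v` is a `4 × 4` linear system in `(c, d, e, f)`,
which has a nonzero solution iff its determinant `(u²−1)(v²−1)(u−v)²(uv−1)²` vanishes.
-/

/-- The six coordinate triples `(u²,u,1), (u⁻²,u⁻¹,1), (v²,v,1), (v⁻²,v⁻¹,1), (1,0,0), (0,1,0)`. -/
def sixTriples {k : Type*} [Field k] (u v : k) : Fin 6 → Fin 3 → k :=
  ![![u ^ 2, u, 1], ![(u ^ 2)⁻¹, u⁻¹, 1], ![v ^ 2, v, 1], ![(v ^ 2)⁻¹, v⁻¹, 1],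
    ![1, 0, 0], ![0, 1, 0]]

open Matrix

section Quadratic
variable {R : Type*} [CommSemiring R]

def ternaryQuadratic (a b c d e f : R) (p : Fin 3 → R) : R :=
  a * p 0 ^ 2 + b * p 1 ^ 2 + c * p 2 ^ 2 + d * (p 0 * p 1) + e * (p 0 * p 2) + f * (p 1 * p 2)

theorem ternaryQuadratic_one_zero_zero (a b c d e f : R) :
    ternaryQuadratic a b c d e f ![1, 0, 0] = a := by
  simp [ternaryQuadratic]

theorem ternaryQuadratic_zero_one_zero (a b c d e f : R) :
    ternaryQuadratic a b c d e f ![0, 1, 0] = b := by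
  simp [ternaryQuadratic]

theorem ternaryQuadratic_sq_self_one (c d e f t : R) :
    ternaryQuadratic 0 0 c d e f ![t ^ 2, t, 1] = c + d * t ^ 3 + e * t ^ 2 + f * t := by
  simp [ternaryQuadratic]; ring

end Quadratic

theorem ternaryQuadratic_inv_sq_inv_one_eq_zero_iff {k : Type*} [Field k] (c d e f : k) {t : k}
    (ht : t ≠ 0) :
    ternaryQuadratic 0 0 c d e f ![(t ^ 2)⁻¹, t⁻¹, 1] = 0 ↔
      c * t ^ 3 + d + e * t + f * t ^ 2 = 0 := by
  have : ternaryQuadratic 0 0 c d e f ![(t ^ 2)⁻¹, t⁻¹, 1] =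
      (c * t ^ 3 + d + e * t + f * t ^ 2) / t ^ 3 := by
    simp [ternaryQuadratic]; field_simp
  simp [this, ht]

section CubicPair
variable {R : Type*} [CommRing R]

def cubicPairMatrix (u v : R) : Matrix (Fin 4) (Fin 4) R :=
  !![1, u ^ 3, u ^ 2, u; 1, v ^ 3, v ^ 2, v; u ^ 3, 1, u, u ^ 2; v ^ 3, 1, v, v ^ 2]

theorem cubicPairMatrix_mulVec_eq_zero_iff (u v c d e f : R) :
    cubicPairMatrix u v *ᵥ ![c, d, e, f] = 0 ↔
      c + d * u ^ 3 + e * u ^ 2 + f * u = 0 ∧ c + d * v ^ 3 + e * v ^ 2 + f * v = 0 ∧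
      c * u ^ 3 + d + e * u + f * u ^ 2 = 0 ∧ c * v ^ 3 + d + e * v + f * v ^ 2 = 0 := by
  simp [cubicPairMatrix, funext_iff, Fin.forall_fin_succ, add_assoc]

theorem det_cubicPairMatrix (u v : R) :
    (cubicPairMatrix u v).det = (u ^ 2 - 1) * (v ^ 2 - 1) * (u - v) ^ 2 * (u * v - 1) ^ 2 := by
  simp [cubicPairMatrix, det_succ_row_zero, Fin.sum_univ_succ, Fin.succAbove]
  ring

end CubicPair

theorem forall_ternaryQuadratic_sixTriples_eq_zero_iff {k : Type*} [Field k] {u v : k}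
    (hu : u ≠ 0) (hv : v ≠ 0) (a b c d e f : k) :
    (∀ m, ternaryQuadratic a b c d e f (sixTriples u v m) = 0) ↔
      a = 0 ∧ b = 0 ∧ cubicPairMatrix u v *ᵥ ![c, d, e, f] = 0 := by
  simp only [Fin.forall_fin_succ, IsEmpty.forall_iff, and_true, sixTriples, cons_val_zero,
    cons_val_succ, ternaryQuadratic_one_zero_zero, ternaryQuadratic_zero_one_zero,
    cubicPairMatrix_mulVec_eq_zero_iff]
  constructor
  · rintro ⟨h₁, h₂, h₃, h₄, rfl, rfl⟩
    rw [ternaryQuadratic_sq_self_one] at h₁ h₃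
    rw [ternaryQuadratic_inv_sq_inv_one_eq_zero_iff _ _ _ _ hu] at h₂
    rw [ternaryQuadratic_inv_sq_inv_one_eq_zero_iff _ _ _ _ hv] at h₄
    exact ⟨rfl, rfl, h₁, h₃, h₂, h₄⟩
  · rintro ⟨rfl, rfl, h₁, h₃, h₂, h₄⟩
    rw [ternaryQuadratic_sq_self_one, ternaryQuadratic_sq_self_one,
      ternaryQuadratic_inv_sq_inv_one_eq_zero_iff _ _ _ _ hu,
      ternaryQuadratic_inv_sq_inv_one_eq_zero_iff _ _ _ _ hv]
    exact ⟨h₁, h₂, h₃, h₄, rfl, rfl⟩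

theorem conic_through_six_iff {k : Type*} [Field k] (u v : k) (hu : u ≠ 0) (hv : v ≠ 0) :
    (∃ a b c d e f : k, (a, b, c, d, e, f) ≠ (0, 0, 0, 0, 0, 0) ∧
        ∀ m : Fin 6,
          a * sixTriples u v m 0 ^ 2 + b * sixTriples u v m 1 ^ 2 +
            c * sixTriples u v m 2 ^ 2 + d * (sixTriples u v m 0 * sixTriples u v m 1) +
            e * (sixTriples u v m 0 * sixTriples u v m 2) +
            f * (sixTriples u v m 1 * sixTriples u v m 2) = 0) ↔
      (u ^ 2 - 1) * (v ^ 2 - 1) * (u - v) * (u * v - 1) = 0 := by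
  change (∃ a b c d e f : k, _ ∧ ∀ m, ternaryQuadratic a b c d e f (sixTriples u v m) = 0) ↔ _
  simp only [forall_ternaryQuadratic_sixTriples_eq_zero_iff hu hv]
  calc _ ↔ ∃ w ≠ 0, cubicPairMatrix u v *ᵥ w = 0 := by
        constructor
        · rintro ⟨a, b, c, d, e, f, hne, rfl, rfl, hw⟩
          exact ⟨![c, d, e, f], by simpa [funext_iff, Fin.forall_fin_succ] using hne, hw⟩
        · rintro ⟨w, hw, hMw⟩
          refine ⟨0, 0, w 0, w 1, w 2, w 3, ?_, rfl, rfl, ?_⟩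
          · contrapose! hw
            simpa [funext_iff, Fin.forall_fin_succ] using hw
          · rwa [← FinVec.etaExpand_eq w] at hMw
    _ ↔ (cubicPairMatrix u v).det = 0 := exists_mulVec_eq_zero_iff
    _ ↔ _ := by simp [det_cubicPairMatrix, mul_eq_zero]
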